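/- For all integers n ≥ 3 and 1 ≤ m ≤ ⌊(n−1)/2⌋, under the explicit labeling g of the generalised Petersen graph P(n,m) (defined in the context), the edge-weights wt_g(xy)=g(x)+g(y)+g(xy) of all 3n edges of P(n,m) are pairwise distinct; that is, g is an edge-antimagic total labeling of P(n,m). -/
import Mathlib


open Sum

/-- The weight of an edge `e` under a total labeling `f` of the graph `G`:
the label of `e` plus the labels of its two endpoints. -/
noncomputable def edgeWt {V : Type*} (G : SimpleGraph V) (f : V ⊕ G.edgeSet → ℕ)
    (e : G.edgeSet) : ℕ :=
  f (inr e) + ∑ᶠ (v : V) (_ : v ∈ (e : Sym2 V)), f (inl v)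

/-- The weight of a vertex `v` under a total labeling `f` of the graph `G`:
the label of `v` plus the labels of all edges incident with `v`. -/
noncomputable def vertexWt {V : Type*} (G : SimpleGraph V) (f : V ⊕ G.edgeSet → ℕ)
    (v : V) : ℕ :=
  f (inl v) + ∑ᶠ (e : G.edgeSet) (_ : v ∈ (e : Sym2 V)), f (inr e)

/-- The generalised Petersen graph `P(n,m)`, with outer vertices `u_i = inl i` and
inner vertices `v_i = inr i` (`i` running over `Fin n`), outer cycle edges `u_i u_{i+1}`,
spokes `u_i v_i`, and inner edges `v_i v_{i+m}` (indices mod `n`). -/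
def petersen (n m : ℕ) : SimpleGraph (Fin n ⊕ Fin n) :=
  SimpleGraph.fromRel (fun a b =>
    (∃ p q : Fin n, ((p : ℕ) + 1) % n = (q : ℕ) ∧ a = inl p ∧ b = inl q) ∨
    (∃ p q : Fin n, ((p : ℕ) + m) % n = (q : ℕ) ∧ a = inr p ∧ b = inr q) ∨
    (∃ p : Fin n, a = inl p ∧ b = inr p))

/-- Helper for labeling the edges of a cycle-like structure symmetrically: on an edge
joining `p` to `q = (p + s) mod n` it takes the value `base - p` (0-based indices). -/
def cycEL (n s base : ℕ) (p q : Fin n) : ℕ :=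
  if (q : ℕ) = ((p : ℕ) + s) % n ∧ (p : ℕ) = ((q : ℕ) + s) % n then
    base - min (p : ℕ) (q : ℕ)
  else if (q : ℕ) = ((p : ℕ) + s) % n then base - (p : ℕ)
  else if (p : ℕ) = ((q : ℕ) + s) % n then base - (q : ℕ)
  else 0

lemma cycEL_comm (n s base : ℕ) (p q : Fin n) : cycEL n s base p q = cycEL n s base q p := by
  unfold cycEL
  by_cases h1 : (q : ℕ) = ((p : ℕ) + s) % n <;> by_cases h2 : (p : ℕ) = ((q : ℕ) + s) % n
  · rw [if_pos ⟨h1, h2⟩, if_pos ⟨h2, h1⟩, Nat.min_comm]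
  · rw [if_neg (fun h => h2 h.2), if_pos h1, if_neg (fun h => h2 h.1), if_neg h2, if_pos h1]
  · rw [if_neg (fun h => h1 h.1), if_neg h1, if_pos h2, if_neg (fun h => h1 h.2), if_pos h2]
  · rw [if_neg (fun h => h1 h.1), if_neg h1, if_neg h2, if_neg (fun h => h2 h.1), if_neg h2,
      if_neg h1]

/-- Labels of the vertices of `P(n,m)`: `g(u_i) = i` and `g(v_i) = n + i`
(1-based index `i = k + 1`). -/
def petVL (n : ℕ) : Fin n ⊕ Fin n → ℕ
  | inl k => (k : ℕ) + 1
  | inr k => n + (k : ℕ) + 1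

/-- Labels of the edges of `P(n,m)`, written as a symmetric function of the two
endpoints: `g(u_i u_{i+1}) = 3n - i + 1`, `g(u_1 v_1) = 3n + 1`,
`g(u_i v_i) = 4n - i + 2` for `2 ≤ i ≤ n`, and `g(v_i v_{i+m}) = 5n - i + 1`
(all indices 1-based, `i = k + 1`). -/
def petEL (n m : ℕ) : Fin n ⊕ Fin n → Fin n ⊕ Fin n → ℕ
  | inl p, inl q => cycEL n 1 (3 * n) p q
  | inr p, inr q => cycEL n m (5 * n) p q
  | inl p, inr _ => if (p : ℕ) = 0 then 3 * n + 1 else 4 * n - (p : ℕ) + 1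
  | inr _, inl q => if (q : ℕ) = 0 then 3 * n + 1 else 4 * n - (q : ℕ) + 1

lemma petEL_comm (n m : ℕ) (a b : Fin n ⊕ Fin n) : petEL n m a b = petEL n m b a := by
  rcases a with p | p <;> rcases b with q | q <;> simp [petEL, cycEL_comm]

/-- The explicit super total labeling `g` of the generalised Petersen graph `P(n,m)`
from the paper. -/
def petLabel (n m : ℕ) : (Fin n ⊕ Fin n) ⊕ (petersen n m).edgeSet → ℕ :=
  Sum.elim (petVL n)
    (fun e => Sym2.lift ⟨petEL n m, petEL_comm n m⟩ (e : Sym2 (Fin n ⊕ Fin n)))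


section AuxEAT

lemma sym2_exists' {α : Type*} (z : Sym2 α) : ∃ a b, z = s(a, b) :=
  Sym2.inductionOn z fun x y => ⟨x, y, rfl⟩

lemma mod_add_eq' {n a s : ℕ} (ha : a < n) (hs : s ≤ n) :
    (a + s) % n = a + s ∧ a + s < n ∨ (a + s) % n = a + s - n ∧ n ≤ a + s := by
  rcases Nat.lt_or_ge (a + s) n with h | h
  · exact Or.inl ⟨Nat.mod_eq_of_lt h, h⟩
  · refine Or.inr ⟨?_, h⟩
    rw [Nat.mod_eq_sub_mod h]
    exact Nat.mod_eq_of_lt (by omega)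

lemma finsum_sym2_pair {V : Type*} (f : V → ℕ) (a b : V) (hab : a ≠ b) :
    ∑ᶠ (v : V) (_ : v ∈ s(a, b)), f v = f a + f b := by
  classical
  have h1 : ∀ v : V, (∑ᶠ _ : v ∈ s(a, b), f v) = ∑ᶠ _ : v ∈ ({a, b} : Set V), f v := by
    intro v
    rw [finsum_eq_if, finsum_eq_if]
    simp [Sym2.mem_iff, Set.mem_insert_iff]
  calc ∑ᶠ (v : V) (_ : v ∈ s(a, b)), f v
      = ∑ᶠ v ∈ ({a, b} : Set V), f v := finsum_congr h1
    _ = f a + f b := finsum_mem_pair hab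

lemma edgeWt_eq_of {V : Type*} (G : SimpleGraph V) (f : V ⊕ G.edgeSet → ℕ)
    (e : G.edgeSet) (a b : V) (h : (e : Sym2 V) = s(a, b)) :
    edgeWt G f e = f (inr e) + (f (inl a) + f (inl b)) := by
  have hadj : G.Adj a b := by
    have := e.2
    rwa [h, SimpleGraph.mem_edgeSet] at this
  unfold edgeWt
  rw [h, finsum_sym2_pair (fun v => f (inl v)) a b hadj.ne]

lemma wt_formula (n m : ℕ) (e : (petersen n m).edgeSet) (a b : Fin n ⊕ Fin n)
    (h : (e : Sym2 (Fin n ⊕ Fin n)) = s(a, b)) :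
    edgeWt (petersen n m) (petLabel n m) e = petEL n m a b + (petVL n a + petVL n b) := by
  rw [edgeWt_eq_of _ _ e a b h]
  simp [petLabel, h]

lemma cycEL_eval {n s : ℕ} (base : ℕ) (hs : 0 < s) (h2 : 2 * s < n) (p q : Fin n)
    (hq : ((p : ℕ) + s) % n = (q : ℕ)) : cycEL n s base p q = base - (p : ℕ) := by
  have hp : ¬ (p : ℕ) = ((q : ℕ) + s) % n := by
    intro hp
    rw [← hq, Nat.mod_add_mod, Nat.add_assoc] at hp
    rcases mod_add_eq' (a := (p : ℕ)) (s := s + s) p.isLt (by omega) with ⟨h, h'⟩ | ⟨h, h'⟩ <;>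
      omega
  unfold cycEL
  rw [if_neg (fun hh => hp hh.2), if_pos hq.symm]

lemma pet_desc {n m : ℕ} (e : (petersen n m).edgeSet) :
    (∃ p q : Fin n, ((p : ℕ) + 1) % n = (q : ℕ) ∧
        (e : Sym2 (Fin n ⊕ Fin n)) = s(inl p, inl q)) ∨
    (∃ p q : Fin n, ((p : ℕ) + m) % n = (q : ℕ) ∧
        (e : Sym2 (Fin n ⊕ Fin n)) = s(inr p, inr q)) ∨
    (∃ p : Fin n, (e : Sym2 (Fin n ⊕ Fin n)) = s(inl p, inr p)) := by
  obtain ⟨a, b, hab⟩ := sym2_exists' (e : Sym2 (Fin n ⊕ Fin n))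
  have hadj : (petersen n m).Adj a b := by
    have := e.2
    rwa [hab, SimpleGraph.mem_edgeSet] at this
  rw [petersen, SimpleGraph.fromRel_adj] at hadj
  obtain ⟨hne, h | h⟩ := hadj
  · rcases h with ⟨p, q, h1, rfl, rfl⟩ | ⟨p, q, h1, rfl, rfl⟩ | ⟨p, rfl, rfl⟩
    · exact Or.inl ⟨p, q, h1, hab⟩
    · exact Or.inr (Or.inl ⟨p, q, h1, hab⟩)
    · exact Or.inr (Or.inr ⟨p, hab⟩)
  · rcases h with ⟨p, q, h1, rfl, rfl⟩ | ⟨p, q, h1, rfl, rfl⟩ | ⟨p, rfl, rfl⟩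
    · exact Or.inl ⟨p, q, h1, hab.trans (Sym2.eq_swap)⟩
    · exact Or.inr (Or.inl ⟨p, q, h1, hab.trans (Sym2.eq_swap)⟩)
    · exact Or.inr (Or.inr ⟨p, hab.trans (Sym2.eq_swap)⟩)

lemma wt_outer {n m : ℕ} (hn : 3 ≤ n) (e : (petersen n m).edgeSet) (p q : Fin n)
    (hq : ((p : ℕ) + 1) % n = (q : ℕ))
    (h : (e : Sym2 (Fin n ⊕ Fin n)) = s(inl p, inl q)) :
    edgeWt (petersen n m) (petLabel n m) e = 3 * n + 2 + (q : ℕ) := by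
  rw [wt_formula n m e _ _ h]
  show cycEL n 1 (3 * n) p q + (((p : ℕ) + 1) + ((q : ℕ) + 1)) = _
  rw [cycEL_eval (3 * n) (by omega) (by omega) p q hq]
  have := p.isLt
  omega

lemma wt_inner {n m : ℕ} (hm1 : 1 ≤ m) (h2m : 2 * m < n) (e : (petersen n m).edgeSet)
    (p q : Fin n) (hq : ((p : ℕ) + m) % n = (q : ℕ))
    (h : (e : Sym2 (Fin n ⊕ Fin n)) = s(inr p, inr q)) :
    edgeWt (petersen n m) (petLabel n m) e = 7 * n + 2 + (q : ℕ) := by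
  rw [wt_formula n m e _ _ h]
  show cycEL n m (5 * n) p q + ((n + (p : ℕ) + 1) + (n + (q : ℕ) + 1)) = _
  rw [cycEL_eval (5 * n) (by omega) h2m p q hq]
  have := p.isLt
  omega

lemma wt_spoke {n m : ℕ} (hn : 3 ≤ n) (e : (petersen n m).edgeSet) (p : Fin n)
    (h : (e : Sym2 (Fin n ⊕ Fin n)) = s(inl p, inr p)) :
    edgeWt (petersen n m) (petLabel n m) e =
      if (p : ℕ) = 0 then 4 * n + 3 else 5 * n + 3 + (p : ℕ) := by
  rw [wt_formula n m e _ _ h]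
  show (if (p : ℕ) = 0 then 3 * n + 1 else 4 * n - (p : ℕ) + 1) +
      (((p : ℕ) + 1) + (n + (p : ℕ) + 1)) = _
  have := p.isLt
  split <;> omega

end AuxEAT

/-- For all `n ≥ 3` and `1 ≤ m ≤ ⌊(n-1)/2⌋`, under the explicit labeling `g` of the
generalised Petersen graph `P(n,m)`, the edge-weights of all `3n` edges are pairwise
distinct, i.e. `g` is an edge-antimagic total labeling of `P(n,m)`. -/
theorem petLabel_EAT (n m : ℕ) (hn : 3 ≤ n) (hm1 : 1 ≤ m) (hm2 : m ≤ (n - 1) / 2) :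
    Function.Injective (edgeWt (petersen n m) (petLabel n m)) := by
  have h2m : 2 * m < n := by omega
  intro e₁ e₂ hw
  rcases pet_desc e₁ with ⟨p₁, q₁, hq₁, h₁⟩ | ⟨p₁, q₁, hq₁, h₁⟩ | ⟨p₁, h₁⟩ <;>
    rcases pet_desc e₂ with ⟨p₂, q₂, hq₂, h₂⟩ | ⟨p₂, q₂, hq₂, h₂⟩ | ⟨p₂, h₂⟩
  · -- outer / outer
    rw [wt_outer hn e₁ p₁ q₁ hq₁ h₁, wt_outer hn e₂ p₂ q₂ hq₂ h₂] at hw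
    have hq : (q₁ : ℕ) = (q₂ : ℕ) := by omega
    have hp : (p₁ : ℕ) = (p₂ : ℕ) := by
      rcases mod_add_eq' (a := (p₁ : ℕ)) (s := 1) p₁.isLt (by omega) with ⟨h, h'⟩ | ⟨h, h'⟩ <;>
        rcases mod_add_eq' (a := (p₂ : ℕ)) (s := 1) p₂.isLt (by omega) with ⟨g, g'⟩ | ⟨g, g'⟩ <;>
        omega
    have : (e₁ : Sym2 (Fin n ⊕ Fin n)) = (e₂ : Sym2 (Fin n ⊕ Fin n)) := by
      rw [h₁, h₂, Fin.ext hp, Fin.ext hq]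
    exact Subtype.ext this
  · rw [wt_outer hn e₁ p₁ q₁ hq₁ h₁, wt_inner hm1 h2m e₂ p₂ q₂ hq₂ h₂] at hw
    have := q₁.isLt; omega
  · rw [wt_outer hn e₁ p₁ q₁ hq₁ h₁, wt_spoke hn e₂ p₂ h₂] at hw
    have := q₁.isLt; have := p₂.isLt
    split at hw <;> omega
  · rw [wt_inner hm1 h2m e₁ p₁ q₁ hq₁ h₁, wt_outer hn e₂ p₂ q₂ hq₂ h₂] at hw
    have := q₂.isLt; omega
  · -- inner / inner
    rw [wt_inner hm1 h2m e₁ p₁ q₁ hq₁ h₁, wt_inner hm1 h2m e₂ p₂ q₂ hq₂ h₂] at hw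
    have hq : (q₁ : ℕ) = (q₂ : ℕ) := by omega
    have hp : (p₁ : ℕ) = (p₂ : ℕ) := by
      rcases mod_add_eq' (a := (p₁ : ℕ)) (s := m) p₁.isLt (by omega) with ⟨h, h'⟩ | ⟨h, h'⟩ <;>
        rcases mod_add_eq' (a := (p₂ : ℕ)) (s := m) p₂.isLt (by omega) with ⟨g, g'⟩ | ⟨g, g'⟩ <;>
        omega
    have : (e₁ : Sym2 (Fin n ⊕ Fin n)) = (e₂ : Sym2 (Fin n ⊕ Fin n)) := by
      rw [h₁, h₂, Fin.ext hp, Fin.ext hq]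
    exact Subtype.ext this
  · rw [wt_inner hm1 h2m e₁ p₁ q₁ hq₁ h₁, wt_spoke hn e₂ p₂ h₂] at hw
    have := p₂.isLt
    split at hw <;> omega
  · rw [wt_spoke hn e₁ p₁ h₁, wt_outer hn e₂ p₂ q₂ hq₂ h₂] at hw
    have := q₂.isLt; have := p₁.isLt
    split at hw <;> omega
  · rw [wt_spoke hn e₁ p₁ h₁, wt_inner hm1 h2m e₂ p₂ q₂ hq₂ h₂] at hw
    have := p₁.isLt
    split at hw <;> omega
  · -- spoke / spoke
    rw [wt_spoke hn e₁ p₁ h₁, wt_spoke hn e₂ p₂ h₂] at hw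
    have h1 := p₁.isLt; have h2 := p₂.isLt
    have hp : (p₁ : ℕ) = (p₂ : ℕ) := by split at hw <;> split at hw <;> omega
    have : (e₁ : Sym2 (Fin n ⊕ Fin n)) = (e₂ : Sym2 (Fin n ⊕ Fin n)) := by
      rw [h₁, h₂, Fin.ext hp]
    exact Subtype.ext this
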